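/- arXiv:1705.10400 — 2 statements merged into one kernel-verified Lean document; each statement's English description precedes it below -/
import Mathlib

section
/- Let s > 0 and let f̃ : [0,∞) → ℝ be continuously differentiable with M₁ := sup_{x>0}|f̃(x)| < ∞ and M₂ := ∫₀^∞ |f̃'(x)| dx < ∞. Then for all θ ∈ ℝ, |(1 - e^{-s+iθ}) · Σ_{n=1}^∞ f̃(ns) e^{-ns + inθ}| ≤ M₁ + M₂. Consequently |Σ_{n=1}^∞ f̃(ns) e^{-ns} cos(nθ)| ≤ (M₁ + M₂)/√(2 e^{-s}(cosh s - cos θ)). -/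
open Real MeasureTheory Finset

/-!
Multiplying the series by `1 - z` and telescoping gives
`(1 - z) ∑ aₙ zⁿ⁺¹ = a₀ z + ∑ (aₙ₊₁ - aₙ) zⁿ⁺²`, so for `‖z‖ < 1` its norm is at most
`‖a₀‖ + ∑ ‖aₙ₊₁ - aₙ‖`. For `aₙ = f̃((n+1)s)` the total variation `∑ |aₙ₊₁ - aₙ|` is bounded by
`∫₀^∞ |f̃'|` through the fundamental theorem of calculus on each interval `[(n+1)s, (n+2)s]`.
The cosine series is the real part of the complex one, and `|1 - e^{-s+iθ}|² = 2e^{-s}(cosh s - cos θ)`.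
-/

section AbelSummation

theorem norm_le_norm_zero_add_of_sum_range_norm_sub_le {E : Type*} [SeminormedAddCommGroup E]
    {a : ℕ → E} {V : ℝ} (hvar : ∀ N, ∑ n ∈ range N, ‖a (n + 1) - a n‖ ≤ V) (n : ℕ) :
    ‖a n‖ ≤ ‖a 0‖ + V :=
  calc ‖a n‖ ≤ ‖a 0‖ + ‖a n - a 0‖ := norm_le_insert' _ _
    _ ≤ ‖a 0‖ + ∑ i ∈ range n, ‖a (i + 1) - a i‖ := by
        gcongr
        simpa only [dist_eq_norm, norm_sub_rev] using dist_le_range_sum_dist a n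
    _ ≤ ‖a 0‖ + V := by gcongr; exact hvar n

theorem one_sub_mul_tsum_mul_pow_succ {R : Type*} [CommRing R] [TopologicalSpace R]
    [IsTopologicalRing R] [T2Space R] {a : ℕ → R} {z : R}
    (h : Summable fun n => a n * z ^ (n + 1)) :
    (1 - z) * ∑' n, a n * z ^ (n + 1) = a 0 * z + ∑' n, (a (n + 1) - a n) * z ^ (n + 2) := by
  have hshift : Summable fun n => a (n + 1) * z ^ (n + 2) := (summable_nat_add_iff 1).mpr h
  have hmul : Summable fun n => a n * z ^ (n + 2) := by
    simpa only [pow_succ, mul_assoc] using h.mul_right z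
  calc (1 - z) * ∑' n, a n * z ^ (n + 1)
      = (a 0 * z + ∑' n, a (n + 1) * z ^ (n + 2)) - ∑' n, a n * z ^ (n + 2) := by
        rw [sub_mul, one_mul, ← h.tsum_mul_left, h.tsum_eq_zero_add, zero_add, pow_one]
        congr 1
        exact tsum_congr fun n => by ring
    _ = a 0 * z + ∑' n, (a (n + 1) - a n) * z ^ (n + 2) := by
        rw [add_sub_assoc, ← hshift.tsum_sub hmul]
        simp only [sub_mul]

variable {𝕜 : Type*} [NormedField 𝕜] [CompleteSpace 𝕜]

theorem summable_mul_pow_succ_of_norm_le {a : ℕ → 𝕜} {z : 𝕜} {C : ℝ} (hz : ‖z‖ < 1)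
    (ha : ∀ n, ‖a n‖ ≤ C) : Summable fun n => a n * z ^ (n + 1) := by
  refine Summable.of_norm_bounded ((summable_geometric_of_lt_one (norm_nonneg z) hz).mul_left C)
    fun n => ?_
  rw [norm_mul, norm_pow]
  have hC : 0 ≤ C := (norm_nonneg _).trans (ha 0)
  exact mul_le_mul (ha n) (pow_le_pow_of_le_one (norm_nonneg z) hz.le n.le_succ)
    (by positivity) hC

theorem norm_one_sub_mul_tsum_mul_pow_succ_le {a : ℕ → 𝕜} {z : 𝕜} {M₁ M₂ : ℝ} (hz : ‖z‖ < 1)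
    (ha₀ : ‖a 0‖ ≤ M₁) (hvar : ∀ N, ∑ n ∈ range N, ‖a (n + 1) - a n‖ ≤ M₂) :
    ‖(1 - z) * ∑' n, a n * z ^ (n + 1)‖ ≤ M₁ + M₂ := by
  have hsum := summable_mul_pow_succ_of_norm_le hz
    (norm_le_norm_zero_add_of_sum_range_norm_sub_le hvar)
  have hvar_sum : Summable fun n => ‖a (n + 1) - a n‖ :=
    summable_of_sum_range_le (fun _ => norm_nonneg _) hvar
  rw [one_sub_mul_tsum_mul_pow_succ hsum]
  refine (norm_add_le _ _).trans (add_le_add ?_ ?_)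
  · rw [norm_mul]
    exact (mul_le_of_le_one_right (norm_nonneg _) hz.le).trans ha₀
  · refine (tsum_of_norm_bounded hvar_sum.hasSum fun n => ?_).trans
      (Real.tsum_le_of_sum_range_le (fun _ => norm_nonneg _) hvar)
    rw [norm_mul, norm_pow]
    exact mul_le_of_le_one_right (norm_nonneg _) (pow_le_one₀ (norm_nonneg z) hz.le)

end AbelSummation

section Variation

variable {f f' : ℝ → ℝ}

theorem integrableOn_of_hasDerivAt_of_integrableOn_abs {s : Set ℝ} (hs : MeasurableSet s)
    (hderiv : ∀ x ∈ s, HasDerivAt f (f' x) x) (hint : IntegrableOn (fun x => |f' x|) s) :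
    IntegrableOn f' s := by
  have hmeas : AEStronglyMeasurable f' (volume.restrict s) := by
    refine (measurable_deriv f).aestronglyMeasurable.congr ?_
    filter_upwards [ae_restrict_mem hs] with x hx using (hderiv x hx).deriv
  exact (integrable_norm_iff hmeas).mp hint

theorem abs_sub_le_integral_abs_deriv {a b : ℝ} (hab : a ≤ b)
    (hderiv : ∀ x ∈ Set.Icc a b, HasDerivAt f (f' x) x) (hint : IntervalIntegrable f' volume a b) :
    |f b - f a| ≤ ∫ x in a..b, |f' x| := by
  rw [← intervalIntegral.integral_eq_sub_of_hasDerivAt (by rwa [Set.uIcc_of_le hab]) hint]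
  exact intervalIntegral.abs_integral_le_integral_abs hab

theorem sum_range_abs_sub_le_integral_abs_deriv {c : ℝ} {b : ℕ → ℝ} (hb : Monotone b)
    (hc : c < b 0) (hderiv : ∀ x ∈ Set.Ioi c, HasDerivAt f (f' x) x)
    (hint : IntegrableOn (fun x => |f' x|) (Set.Ioi c)) (N : ℕ) :
    ∑ n ∈ range N, |f (b (n + 1)) - f (b n)| ≤ ∫ x in Set.Ioi c, |f' x| := by
  have hsub : ∀ n, Set.Icc (b n) (b (n + 1)) ⊆ Set.Ioi c := fun n x hx =>
    (hc.trans_le (hb n.zero_le)).trans_le hx.1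
  have hf' := integrableOn_of_hasDerivAt_of_integrableOn_abs measurableSet_Ioi hderiv hint
  calc ∑ n ∈ range N, |f (b (n + 1)) - f (b n)|
      ≤ ∑ n ∈ range N, ∫ x in b n..b (n + 1), |f' x| := by
        refine sum_le_sum fun n _ => abs_sub_le_integral_abs_deriv (hb n.le_succ)
          (fun x hx => hderiv x (hsub n hx)) ?_
        exact (intervalIntegrable_iff_integrableOn_Icc_of_le (hb n.le_succ)).mpr
          (hf'.mono_set (hsub n))
    _ = ∫ x in b 0..b N, |f' x| := by
        refine intervalIntegral.sum_integral_adjacent_intervals fun n _ => ?_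
        exact (intervalIntegrable_iff_integrableOn_Icc_of_le (hb n.le_succ)).mpr
          (hint.mono_set (hsub n))
    _ ≤ ∫ x in Set.Ioi c, |f' x| := by
        rw [intervalIntegral.integral_of_le (hb N.zero_le)]
        refine setIntegral_mono_set hint (Filter.Eventually.of_forall fun x => abs_nonneg _) ?_
        exact (Set.Ioc_subset_Ioi_self.trans (Set.Ioi_subset_Ioi hc.le)).eventuallyLE

end Variation

theorem norm_one_sub_exp_neg_add_I_mul (s θ : ℝ) :
    ‖1 - Complex.exp (-(s : ℂ) + Complex.I * θ)‖ =
      √(2 * Real.exp (-s) * (Real.cosh s - Real.cos θ)) := by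
  rw [Complex.norm_def, Complex.normSq_apply]
  congr 1
  simp only [Complex.sub_re, Complex.sub_im, Complex.one_re, Complex.one_im, Complex.exp_re,
    Complex.exp_im, Complex.add_re, Complex.add_im, Complex.neg_re, Complex.neg_im,
    Complex.ofReal_re, Complex.ofReal_im, Complex.mul_re, Complex.mul_im, Complex.I_re,
    Complex.I_im, Real.cosh_eq, mul_zero, zero_mul, sub_zero, add_zero, zero_add, neg_zero,
    one_mul]
  have hee : Real.exp (-s) * Real.exp s = 1 := by rw [← Real.exp_add, neg_add_cancel, exp_zero]
  linear_combination Real.exp (-s) ^ 2 * Real.sin_sq_add_cos_sq θ - hee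

theorem re_ofReal_mul_exp_mul_neg_add_I_mul (r t s θ : ℝ) :
    ((r : ℂ) * Complex.exp ((t : ℂ) * (-(s : ℂ) + Complex.I * θ))).re =
      r * Real.exp (-t * s) * Real.cos (t * θ) := by
  rw [Complex.re_ofReal_mul, Complex.exp_re, mul_assoc]
  congr 3 <;> simp

theorem Complex.abs_re_le_div_norm_of_norm_mul_le {c S : ℂ} {M : ℝ} (hc : c ≠ 0)
    (h : ‖c * S‖ ≤ M) : |S.re| ≤ M / ‖c‖ := by
  rw [le_div_iff₀ (norm_pos_iff.mpr hc)]
  calc |S.re| * ‖c‖ ≤ ‖S‖ * ‖c‖ := by gcongr; exact Complex.abs_re_le_norm S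
    _ = ‖c * S‖ := by rw [norm_mul, mul_comm]
    _ ≤ M := h

theorem abel_summation_estimate (s : ℝ) (hs : 0 < s) (f f' : ℝ → ℝ) (M₁ M₂ : ℝ)
    (hderiv : ∀ x ∈ Set.Ici (0 : ℝ), HasDerivAt f (f' x) x)
    (hM1 : ∀ x > (0 : ℝ), |f x| ≤ M₁)
    (hint : MeasureTheory.IntegrableOn (fun x => |f' x|) (Set.Ioi (0 : ℝ)))
    (hM2 : (∫ x in Set.Ioi (0 : ℝ), |f' x|) = M₂) (θ : ℝ) :
    ‖((1 - Complex.exp (-(s : ℂ) + Complex.I * (θ : ℂ))) *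
        ∑' n : ℕ, ((f (((n : ℝ) + 1) * s) : ℝ) : ℂ) *
          Complex.exp ((((n : ℝ) + 1 : ℝ) : ℂ) * (-(s : ℂ) + Complex.I * (θ : ℂ))))‖ ≤
      M₁ + M₂ ∧
    |∑' n : ℕ, f (((n : ℝ) + 1) * s) * Real.exp (-((n : ℝ) + 1) * s) *
        Real.cos (((n : ℝ) + 1) * θ)| ≤
      (M₁ + M₂) / Real.sqrt (2 * Real.exp (-s) * (Real.cosh s - Real.cos θ)) := by
  set z : ℂ := Complex.exp (-(s : ℂ) + Complex.I * θ)
  have hpow : ∀ n : ℕ,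
      Complex.exp ((((n : ℝ) + 1 : ℝ) : ℂ) * (-(s : ℂ) + Complex.I * θ)) = z ^ (n + 1) :=
    fun n => by rw [← Complex.exp_nat_mul]; push_cast; rfl
  simp_rw [← re_ofReal_mul_exp_mul_neg_add_I_mul, hpow, ← norm_one_sub_exp_neg_add_I_mul]
  set a : ℕ → ℂ := fun n => (f (((n : ℝ) + 1) * s) : ℂ)
  have hz : ‖z‖ < 1 := by simpa [z, Complex.norm_exp] using hs
  have hvar : ∀ N, ∑ n ∈ range N, ‖a (n + 1) - a n‖ ≤ M₂ := fun N => by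
    have hb : Monotone fun n : ℕ => ((n : ℝ) + 1) * s := fun m n hmn => by
      dsimp only; gcongr
    rw [← hM2]
    convert sum_range_abs_sub_le_integral_abs_deriv hb (by simpa using hs)
      (fun x hx => hderiv x (Set.mem_Ici.mpr hx.le)) hint N using 2 with n
    simp [a, ← Complex.ofReal_sub]
  have hbound : ‖(1 - z) * ∑' n, a n * z ^ (n + 1)‖ ≤ M₁ + M₂ :=
    norm_one_sub_mul_tsum_mul_pow_succ_le hz (by simpa [a] using hM1 s hs) hvar
  have hsum : Summable fun n => a n * z ^ (n + 1) :=
    summable_mul_pow_succ_of_norm_le hz fun n => by simpa [a] using hM1 _ (by positivity)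
  have hz1 : 1 - z ≠ 0 := sub_ne_zero.mpr fun h => by simp [← h] at hz
  rw [← Complex.re_tsum hsum]
  exact ⟨hbound, Complex.abs_re_le_div_norm_of_norm_mul_le hz1 hbound⟩
end

section
/- Let s ∈ (0,1) and let f̃ : [0,∞) → ℝ be twice continuously differentiable with f̃(0) = f₀, |f̃'(x)| ≤ C₁ for 0 ≤ x ≤ 1, and |f̃''(x)| ≤ C₂ (1+x)^N e^{-x/2} for all x ≥ 0, for some constants C₁, C₂ > 0 and N ∈ ℕ. Define r(x) := f̃(x) - f₀. Then there exists a constant C depending only on C₁, C₂, N (not on s) such that for all θ ∈ ℝ, |(1 - e^{-s+iθ})² · Σ_{n=1}^∞ r(ns) e^{-ns + inθ}| ≤ C s. -/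
/-!
Put `z = e^{-s+iθ}` and `a n = r(ns)`, so that `a 0 = 0`. Multiplying a power series by `1 - z`
replaces its coefficients by their backward differences; doing it twice gives
`(1 - z)² ∑ a n zⁿ = a 1 z + ∑ (a (n+2) - 2 a (n+1) + a n) z^{n+2}`.
The mean value theorem bounds `a 1` by `C₁ s` and writes each second difference as `s² f̃''(η)`
with `η ≥ ns`; the decay of `f̃''` makes this at most a constant times `s² e^{-ns/4}`, and the
geometric series `∑ e^{-ns/4} = O(1/s)` leaves `O(s)`.
-/

open Real

def backwardDiff {G : Type*} [AddGroup G] (c : ℕ → G) : ℕ → G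
  | 0 => c 0
  | n + 1 => c (n + 1) - c n

theorem backwardDiff_backwardDiff_add_two {R : Type*} [Ring R] (c : ℕ → R) (n : ℕ) :
    backwardDiff (backwardDiff c) (n + 2) = c (n + 2) - 2 * c (n + 1) + c n := by
  simp only [backwardDiff]
  noncomm_ring

theorem HasSum.backwardDiff_mul_pow {R : Type*} [CommRing R] [TopologicalSpace R]
    [IsTopologicalRing R] {c : ℕ → R} {z S : R} (h : HasSum (fun n => c n * z ^ n) S) :
    HasSum (fun n => backwardDiff c n * z ^ n) ((1 - z) * S) := by
  have hshift : HasSum (fun n => c (n + 1) * z ^ (n + 1)) (S - c 0) := by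
    simpa using (hasSum_nat_add_iff' 1).2 h
  rw [← hasSum_nat_add_iff' 1]
  convert hshift.sub (h.mul_left z) using 1
  · funext n
    simp only [backwardDiff]
    ring
  · simp [backwardDiff]
    ring

theorem norm_le_of_hasSum_of_le_geometric {E : Type*} [NormedAddCommGroup E] {d : ℕ → E}
    {T : E} {A B q : ℝ} (h : HasSum d T) (h0 : d 0 = 0) (h1 : ‖d 1‖ ≤ A) (hq0 : 0 ≤ q)
    (hq1 : q < 1) (htail : ∀ n, ‖d (n + 2)‖ ≤ B * q ^ n) : ‖T‖ ≤ A + B * (1 - q)⁻¹ := by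
  have hT : HasSum (fun n => d (n + 2)) (T - d 1) := by
    simpa [Finset.sum_range_succ, h0] using (hasSum_nat_add_iff' 2).2 h
  calc ‖T‖ = ‖d 1 + (T - d 1)‖ := by rw [add_sub_cancel]
    _ ≤ ‖d 1‖ + ‖T - d 1‖ := norm_add_le _ _
    _ ≤ A + B * (1 - q)⁻¹ :=
      add_le_add h1 (hT.norm_le_of_bounded ((hasSum_geometric_of_lt_one hq0 hq1).mul_left B) htail)

theorem norm_one_sub_sq_mul_tsum_le {𝕜 : Type*} [NormedField 𝕜] {a : ℕ → 𝕜} {z : 𝕜}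
    {A B q : ℝ} (hz : ‖z‖ ≤ 1) (ha0 : a 0 = 0) (ha1 : ‖a 1‖ ≤ A) (hq0 : 0 ≤ q) (hq1 : q < 1)
    (htail : ∀ n, ‖a (n + 2) - 2 * a (n + 1) + a n‖ ≤ B * q ^ n) :
    ‖(1 - z) ^ 2 * ∑' n, a (n + 1) * z ^ (n + 1)‖ ≤ A + B * (1 - q)⁻¹ := by
  by_cases hS : Summable fun n => a (n + 1) * z ^ (n + 1)
  swap
  · have hB : 0 ≤ B := by simpa using (norm_nonneg _).trans (htail 0)
    rw [tsum_eq_zero_of_not_summable hS, mul_zero, norm_zero]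
    exact add_nonneg ((norm_nonneg _).trans ha1) (mul_nonneg hB (inv_nonneg.2 (by linarith)))
  have ha : HasSum (fun n => a n * z ^ n) (∑' n, a (n + 1) * z ^ (n + 1)) := by
    rw [← hasSum_nat_add_iff' 1]
    simpa [ha0] using hS.hasSum
  refine norm_le_of_hasSum_of_le_geometric
    (by simpa [sq, mul_assoc] using ha.backwardDiff_mul_pow.backwardDiff_mul_pow)
    (by simp [backwardDiff, ha0]) ?_ hq0 hq1 fun n => ?_
  · simpa [backwardDiff, ha0] using (mul_le_of_le_one_right (norm_nonneg _) hz).trans ha1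
  · rw [backwardDiff_backwardDiff_add_two, norm_mul, norm_pow]
    exact (mul_le_of_le_one_right (norm_nonneg _) (pow_le_one₀ (norm_nonneg z) hz)).trans
      (htail n)

theorem exists_sub_eq_mul_of_hasDerivAt {f f' : ℝ → ℝ} {a b : ℝ} (hab : a < b)
    (hf : ∀ x ∈ Set.Icc a b, HasDerivAt f (f' x) x) :
    ∃ ξ ∈ Set.Ioo a b, f b - f a = (b - a) * f' ξ := by
  obtain ⟨ξ, hξ, hslope⟩ := exists_hasDerivAt_eq_slope f f' hab
    (fun x hx => (hf x hx).continuousAt.continuousWithinAt)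
    (fun x hx => hf x (Set.Ioo_subset_Icc_self hx))
  refine ⟨ξ, hξ, ?_⟩
  rw [hslope, mul_div_cancel₀ _ (sub_ne_zero.2 hab.ne')]

theorem exists_second_diff_eq_sq_mul {f f' f'' : ℝ → ℝ} {u h : ℝ} (hh : 0 < h)
    (hf : ∀ x ∈ Set.Icc u (u + 2 * h), HasDerivAt f (f' x) x)
    (hf' : ∀ x ∈ Set.Icc u (u + 2 * h), HasDerivAt f' (f'' x) x) :
    ∃ η ∈ Set.Icc u (u + 2 * h), f (u + 2 * h) - 2 * f (u + h) + f u = h ^ 2 * f'' η := by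
  have hg : ∀ x ∈ Set.Icc u (u + h),
      HasDerivAt (fun y => f (y + h) - f y) (f' (x + h) - f' x) x := fun x hx =>
    ((hf (x + h) ⟨by linarith [hx.1], by linarith [hx.2]⟩).comp_add_const x h).sub
      (hf x ⟨hx.1, by linarith [hx.2]⟩)
  obtain ⟨ξ, hξ, hξeq⟩ := exists_sub_eq_mul_of_hasDerivAt (by linarith) hg
  obtain ⟨η, hη, hηeq⟩ := exists_sub_eq_mul_of_hasDerivAt (f := f') (by linarith : ξ < ξ + h)
    fun x hx => hf' x ⟨by linarith [hx.1, hξ.1], by linarith [hx.2, hξ.2]⟩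
  refine ⟨η, ⟨by linarith [hη.1, hξ.1], by linarith [hη.2, hξ.2]⟩, ?_⟩
  rw [add_sub_cancel_left] at hξeq hηeq
  rw [sq, mul_assoc, ← hηeq, ← hξeq, show u + 2 * h = u + h + h by ring]
  ring

theorem one_add_pow_mul_exp_neg_half_le (N : ℕ) {x : ℝ} (hx : -1 ≤ x) :
    (1 + x) ^ N * exp (-x / 2) ≤ 4 ^ N * N.factorial * exp (1 / 4) * exp (-x / 4) := by
  have h := pow_div_factorial_le_exp ((1 + x) / 4) (by linarith) N
  rw [div_le_iff₀ (by positivity)] at h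
  have hexp : exp ((1 + x) / 4) * exp (-x / 2) = exp (1 / 4) * exp (-x / 4) := by
    rw [← exp_add, ← exp_add]
    ring_nf
  calc (1 + x) ^ N * exp (-x / 2) = 4 ^ N * ((1 + x) / 4) ^ N * exp (-x / 2) := by
        rw [div_pow, mul_div_cancel₀ _ (by positivity)]
    _ ≤ 4 ^ N * (exp ((1 + x) / 4) * N.factorial) * exp (-x / 2) := by gcongr
    _ = 4 ^ N * N.factorial * exp (1 / 4) * exp (-x / 4) := by
        linear_combination (4 ^ N * (N.factorial : ℝ)) * hexp

theorem abs_second_diff_le_geometric {f f' f'' : ℝ → ℝ} {C₂ s : ℝ} {N : ℕ} (hC₂ : 0 ≤ C₂)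
    (hs : 0 < s) (hf : ∀ x ∈ Set.Ici (0 : ℝ), HasDerivAt f (f' x) x)
    (hf' : ∀ x ∈ Set.Ici (0 : ℝ), HasDerivAt f' (f'' x) x)
    (hf'' : ∀ x ∈ Set.Ici (0 : ℝ), |f'' x| ≤ C₂ * (1 + x) ^ N * exp (-x / 2)) (n : ℕ) :
    |f ((n + 2) * s) - 2 * f ((n + 1) * s) + f (n * s)| ≤
      s ^ 2 * (C₂ * (4 ^ N * N.factorial * exp (1 / 4))) * exp (-s / 4) ^ n := by
  have hu : (0 : ℝ) ≤ n * s := by positivity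
  obtain ⟨η, hη, heq⟩ := exists_second_diff_eq_sq_mul hs
    (fun x hx => hf x (hu.trans hx.1)) (fun x hx => hf' x (hu.trans hx.1))
  have hη0 : 0 ≤ η := hu.trans hη.1
  rw [show ((n : ℝ) + 2) * s = n * s + 2 * s by ring, show ((n : ℝ) + 1) * s = n * s + s by ring,
    heq, abs_mul, abs_of_nonneg (sq_nonneg s), mul_assoc]
  gcongr
  calc |f'' η| ≤ C₂ * ((1 + η) ^ N * exp (-η / 2)) := by rw [← mul_assoc]; exact hf'' η hη0
    _ ≤ C₂ * (4 ^ N * N.factorial * exp (1 / 4) * exp (-η / 4)) := by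
        gcongr C₂ * ?_; exact one_add_pow_mul_exp_neg_half_le N (by linarith)
    _ ≤ C₂ * (4 ^ N * N.factorial * exp (1 / 4)) * exp (-s / 4) ^ n := by
        rw [← exp_nat_mul, ← mul_assoc]
        gcongr _ * exp ?_
        linarith [hη.1]

theorem inv_one_sub_exp_neg_le {t : ℝ} (ht : 0 < t) : (1 - exp (-t))⁻¹ ≤ 1 + t⁻¹ := by
  have h : t ≤ exp t - 1 := by linarith [add_one_le_exp t]
  have hpos : 0 < exp t - 1 := ht.trans_le h
  calc (1 - exp (-t))⁻¹ = 1 + (exp t - 1)⁻¹ := by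
        rw [exp_neg]
        field_simp
        ring
    _ ≤ 1 + t⁻¹ := by gcongr

theorem sq_mul_inv_one_sub_exp_neg_le {s : ℝ} (hs0 : 0 < s) (hs1 : s ≤ 1) :
    s ^ 2 * (1 - exp (-s / 4))⁻¹ ≤ 5 * s := by
  have h : (1 - exp (-s / 4))⁻¹ ≤ 1 + (s / 4)⁻¹ := by
    simpa [neg_div] using inv_one_sub_exp_neg_le (t := s / 4) (by positivity)
  calc s ^ 2 * (1 - exp (-s / 4))⁻¹ ≤ s ^ 2 * (1 + (s / 4)⁻¹) := by gcongr
    _ = s ^ 2 + 4 * s := by field_simp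
    _ ≤ 5 * s := by nlinarith

theorem second_order_telescoping_estimate (C₁ C₂ : ℝ) (hC1 : 0 < C₁) (hC2 : 0 < C₂) (N : ℕ) :
    ∃ C > 0, ∀ (f f' f'' : ℝ → ℝ) (f₀ s θ : ℝ), s ∈ Set.Ioo (0 : ℝ) 1 →
      f 0 = f₀ →
      (∀ x ∈ Set.Ici (0 : ℝ), HasDerivAt f (f' x) x) →
      (∀ x ∈ Set.Ici (0 : ℝ), HasDerivAt f' (f'' x) x) →
      ContinuousOn f'' (Set.Ici (0 : ℝ)) →
      (∀ x ∈ Set.Icc (0 : ℝ) 1, |f' x| ≤ C₁) →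
      (∀ x ∈ Set.Ici (0 : ℝ), |f'' x| ≤ C₂ * (1 + x) ^ N * Real.exp (-x / 2)) →
      ‖(1 - Complex.exp (-(s : ℂ) + Complex.I * (θ : ℂ))) ^ 2 *
          ∑' n : ℕ, ((f (((n : ℝ) + 1) * s) - f₀ : ℝ) : ℂ) *
            Complex.exp ((((n : ℝ) + 1 : ℝ) : ℂ) * (-(s : ℂ) + Complex.I * (θ : ℂ)))‖ ≤
        C * s := by
  set K : ℝ := 4 ^ N * N.factorial * exp (1 / 4)
  refine ⟨C₁ + 5 * (C₂ * K), by positivity, ?_⟩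
  rintro f f' f'' f₀ s θ ⟨hs0, hs1⟩ rfl hf hf' - hf'_le hf''_le
  set z := Complex.exp (-(s : ℂ) + Complex.I * θ)
  set a : ℕ → ℂ := fun n => ((f (n * s) - f 0 : ℝ) : ℂ)
  have hterm (n : ℕ) : ((f ((n + 1) * s) - f 0 : ℝ) : ℂ) *
      Complex.exp (((n + 1 : ℝ) : ℂ) * (-(s : ℂ) + Complex.I * θ)) = a (n + 1) * z ^ (n + 1) := by
    rw [← Complex.exp_nat_mul]
    simp only [a]
    push_cast
    rfl
  have hz : ‖z‖ ≤ 1 := by simpa [z, Complex.norm_exp] using hs0.le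
  have ha1 : ‖a 1‖ ≤ C₁ * s := by
    rw [show a 1 = ((f s - f 0 : ℝ) : ℂ) by simp [a], Complex.norm_real, Real.norm_eq_abs]
    simpa using norm_image_sub_le_of_norm_deriv_le_segment' (a := 0) (b := s)
      (fun x hx => (hf x hx.1).hasDerivWithinAt)
      (fun x hx => hf'_le x ⟨hx.1, by linarith [hx.2]⟩) s ⟨hs0.le, le_rfl⟩
  have htail (n : ℕ) : ‖a (n + 2) - 2 * a (n + 1) + a n‖ ≤
      s ^ 2 * (C₂ * K) * exp (-s / 4) ^ n := by
    have hcast : a (n + 2) - 2 * a (n + 1) + a n =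
        ((f ((n + 2) * s) - 2 * f ((n + 1) * s) + f (n * s) : ℝ) : ℂ) := by
      simp only [a]
      push_cast
      ring
    rw [hcast, Complex.norm_real, Real.norm_eq_abs]
    exact abs_second_diff_le_geometric hC2.le hs0 hf hf' hf''_le n
  rw [tsum_congr hterm]
  refine (norm_one_sub_sq_mul_tsum_le hz (by simp [a]) ha1 (exp_pos _).le
    (exp_lt_one_iff.2 (by linarith)) htail).trans ?_
  calc C₁ * s + s ^ 2 * (C₂ * K) * (1 - exp (-s / 4))⁻¹
      = C₁ * s + C₂ * K * (s ^ 2 * (1 - exp (-s / 4))⁻¹) := by ring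
    _ ≤ C₁ * s + C₂ * K * (5 * s) := by
        gcongr C₁ * s + _ * ?_
        exact sq_mul_inv_one_sub_exp_neg_le hs0 hs1.le
    _ = (C₁ + 5 * (C₂ * K)) * s := by ring
end
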